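/- Let A, B, C be pairwise disjoint finite sets, E_AB ⊆ A × B, E_BC ⊆ B × C, and let v ↦ v̄ be an injective map from A ∪ B ∪ C into (0, 0.1]. Let K be the graph whose vertices are the elements of the disjoint union A ⊔ E_AB ⊔ E_BC ⊔ C, where two vertices are adjacent iff their associated hypercubes intersect: vertex a ∈ A has cube □(s_ā); vertex (a,b) ∈ E_AB has cube □(p_{ā,b̄}); vertex (b,c) ∈ E_BC has cube □(q_{b̄,c̄}); vertex c ∈ C has cube □(t_c̄). Then every pair of vertices of K is at graph distance at most 3 if and only if for every a ∈ A and every c ∈ C there exists b ∈ B with (a,b) ∈ E_AB and (b,c) ∈ E_BC. -/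

import Mathlib

noncomputable section

/-- The closed axis-parallel hypercube of side length 1 centered at `p ∈ ℝ⁴`. -/
def cube (p : Fin 4 → ℝ) : Set (Fin 4 → ℝ) :=
  {x | ∀ i, |x i - p i| ≤ 1 / 2}

/-- Center `s_a = (a, −a, 0, 0)`. -/
def sC (a : ℝ) : Fin 4 → ℝ := ![a, -a, 0, 0]

/-- Center `p_{a,b} = (1+a, 1−a, 0.5+b, 0.5−b)`. -/
def pC (a b : ℝ) : Fin 4 → ℝ := ![1 + a, 1 - a, 0.5 + b, 0.5 - b]

/-- Center `q_{b,c} = (1+c, 1−c, 1.5+b, 1.5−b)`. -/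
def qC (b c : ℝ) : Fin 4 → ℝ := ![1 + c, 1 - c, 1.5 + b, 1.5 - b]

/-- Center `t_c = (c, −c, 2, 2)`. -/
def tC (c : ℝ) : Fin 4 → ℝ := ![c, -c, 2, 2]

variable {A B C : Type*}

/-- The hypercube center associated to each vertex of the disjoint union
`A ⊔ E_AB ⊔ E_BC ⊔ C`, where vertices in `A` get `□(s_ā)`, edges `(a,b) ∈ E_AB`
get `□(p_{ā,b̄})`, edges `(b,c) ∈ E_BC` get `□(q_{b̄,c̄})`, and vertices in `C`
get `□(t_c̄)`. -/
def vertexCenter (EAB : Set (A × B)) (EBC : Set (B × C))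
    (la : A → ℝ) (lb : B → ℝ) (lc : C → ℝ) :
    A ⊕ ({e // e ∈ EAB} ⊕ ({e // e ∈ EBC} ⊕ C)) → Fin 4 → ℝ
  | .inl a => sC (la a)
  | .inr (.inl e) => pC (la e.1.1) (lb e.1.2)
  | .inr (.inr (.inl e)) => qC (lb e.1.1) (lc e.1.2)
  | .inr (.inr (.inr c)) => tC (lc c)

/-- The graph `K` on the disjoint union `A ⊔ E_AB ⊔ E_BC ⊔ C`, where two distinct
vertices are adjacent iff their associated unit hypercubes intersect. -/
def K (EAB : Set (A × B)) (EBC : Set (B × C))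
    (la : A → ℝ) (lb : B → ℝ) (lc : C → ℝ) :
    SimpleGraph (A ⊕ ({e // e ∈ EAB} ⊕ ({e // e ∈ EBC} ⊕ C))) :=
  SimpleGraph.fromRel fun u v =>
    (cube (vertexCenter EAB EBC la lb lc u) ∩ cube (vertexCenter EAB EBC la lb lc v)).Nonempty

/-! For labels of absolute value at most 1/2, two cubes of the same kind always meet;
`□(s_a)` meets `□(p_{a',b})` only for `a = a'`, `□(p_{a,b})` meets `□(q_{b',c})` only for `b = b'`,
`□(q_{b,c})` meets `□(t_{c'})` only for `c = c'`, and no other two kinds of cubes ever meet.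
So `K` is a chain of four cliques `A, E_AB, E_BC, C` in which an edge moves at most one layer,
and a path of length 3 from `a ∈ A` to `c ∈ C` has to run through some `(a, b) ∈ E_AB` and
`(b, c) ∈ E_BC`. Conversely, every vertex lies within distance 1 of the clique `A` and of all
`(a, b)` over some `a`, or of the clique `C` and of all `(b, c)` over some `c`; the hypothesis
supplies the middle edge `(a, b) ~ (b, c)` of a path of length 3 between any two vertices. -/

lemma cube_eq_closedBall (p : Fin 4 → ℝ) : cube p = Metric.closedBall p (1 / 2) := by
  ext x
  simp [cube, Metric.mem_closedBall, dist_pi_le_iff, Real.dist_eq]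

lemma cube_inter_cube_nonempty_iff (p q : Fin 4 → ℝ) :
    (cube p ∩ cube q).Nonempty ↔ dist p q ≤ 1 := by
  rw [cube_eq_closedBall, cube_eq_closedBall, ← Set.not_disjoint_iff_nonempty_inter,
    disjoint_closedBall_closedBall_iff (by norm_num) (by norm_num)]
  norm_num

lemma dist_vecCons_le_one_iff {a₀ a₁ a₂ a₃ b₀ b₁ b₂ b₃ : ℝ} :
    dist ![a₀, a₁, a₂, a₃] ![b₀, b₁, b₂, b₃] ≤ 1 ↔
      |a₀ - b₀| ≤ 1 ∧ |a₁ - b₁| ≤ 1 ∧ |a₂ - b₂| ≤ 1 ∧ |a₃ - b₃| ≤ 1 := by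
  simp [dist_pi_le_iff, Fin.forall_fin_succ, Real.dist_eq]

lemma abs_sub_le_one_of_abs_le_half {x y : ℝ} (hx : |x| ≤ 1 / 2) (hy : |y| ≤ 1 / 2) :
    |x - y| ≤ 1 :=
  calc |x - y| ≤ |x| + |y| := abs_sub _ _
    _ ≤ 1 := by linarith

section centers

variable {x y z w : ℝ}

lemma dist_sC_sC_le_one_iff : dist (sC x) (sC y) ≤ 1 ↔ |x - y| ≤ 1 := by
  simp only [sC, dist_vecCons_le_one_iff, abs_le]; grind

lemma dist_pC_pC_le_one_iff : dist (pC x z) (pC y w) ≤ 1 ↔ |x - y| ≤ 1 ∧ |z - w| ≤ 1 := by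
  simp only [pC, dist_vecCons_le_one_iff, abs_le]; grind

lemma dist_qC_qC_le_one_iff : dist (qC z x) (qC w y) ≤ 1 ↔ |x - y| ≤ 1 ∧ |z - w| ≤ 1 := by
  simp only [qC, dist_vecCons_le_one_iff, abs_le]; grind

lemma dist_tC_tC_le_one_iff : dist (tC x) (tC y) ≤ 1 ↔ |x - y| ≤ 1 := by
  simp only [tC, dist_vecCons_le_one_iff, abs_le]; grind

lemma dist_sC_pC_le_one_iff : dist (sC x) (pC y z) ≤ 1 ↔ x = y ∧ |z| ≤ 1 / 2 := by
  simp only [sC, pC, dist_vecCons_le_one_iff, abs_le]; grind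

lemma dist_pC_qC_le_one_iff : dist (pC x z) (qC w y) ≤ 1 ↔ z = w ∧ |x - y| ≤ 1 := by
  simp only [pC, qC, dist_vecCons_le_one_iff, abs_le]; grind

lemma dist_qC_tC_le_one_iff : dist (qC z x) (tC y) ≤ 1 ↔ x = y ∧ |z| ≤ 1 / 2 := by
  simp only [qC, tC, dist_vecCons_le_one_iff, abs_le]; grind

lemma one_lt_dist_sC_qC : 1 < dist (sC x) (qC z y) := by
  simp only [sC, qC, ← not_le, dist_vecCons_le_one_iff, abs_le]; grind

lemma one_lt_dist_sC_tC : 1 < dist (sC x) (tC y) := by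
  simp only [sC, tC, ← not_le, dist_vecCons_le_one_iff, abs_le]; grind

lemma one_lt_dist_pC_tC : 1 < dist (pC x z) (tC y) := by
  simp only [pC, tC, ← not_le, dist_vecCons_le_one_iff, abs_le]; grind

end centers

namespace SimpleGraph

variable {V : Type*} {G : SimpleGraph V}

lemma Adj.edist_le_one {u v : V} (h : G.Adj u v) : G.edist u v ≤ 1 :=
  (edist_eq_one_iff_adj.2 h).le

lemma edist_le_three_of_le_one {u v w x : V}
    (huv : G.edist u v ≤ 1) (hvw : G.edist v w ≤ 1) (hwx : G.edist w x ≤ 1) :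
    G.edist u x ≤ 3 :=
  calc G.edist u x ≤ G.edist u w + G.edist w x := G.edist_triangle
    _ ≤ G.edist u v + G.edist v w + G.edist w x := by gcongr; exact G.edist_triangle
    _ ≤ 1 + 1 + 1 := by gcongr
    _ = 3 := by norm_num

lemma Walk.apply_le_apply_add_length {f : V → ℕ} (hf : ∀ ⦃x y⦄, G.Adj x y → f y ≤ f x + 1)
    {u v : V} (p : G.Walk u v) : f v ≤ f u + p.length := by
  induction p with
  | nil => simp
  | cons h _ ih => have := hf h; simp only [Walk.length_cons]; omega

end SimpleGraph

namespace K

def layer {α β γ δ : Type*} : α ⊕ (β ⊕ (γ ⊕ δ)) → ℕ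
  | .inl _ => 0
  | .inr (.inl _) => 1
  | .inr (.inr (.inl _)) => 2
  | .inr (.inr (.inr _)) => 3

variable {EAB : Set (A × B)} {EBC : Set (B × C)} {la : A → ℝ} {lb : B → ℝ} {lc : C → ℝ}

lemma adj_iff {u v : A ⊕ ({e // e ∈ EAB} ⊕ ({e // e ∈ EBC} ⊕ C))} :
    (K EAB EBC la lb lc).Adj u v ↔
      u ≠ v ∧ dist (vertexCenter EAB EBC la lb lc u) (vertexCenter EAB EBC la lb lc v) ≤ 1 := by
  rw [K, SimpleGraph.fromRel_adj, cube_inter_cube_nonempty_iff, cube_inter_cube_nonempty_iff,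
    dist_comm, or_self]

lemma layer_le_succ_of_adj {u v : A ⊕ ({e // e ∈ EAB} ⊕ ({e // e ∈ EBC} ⊕ C))}
    (h : (K EAB EBC la lb lc).Adj u v) : layer v ≤ layer u + 1 := by
  have hdist := (adj_iff.1 h).2
  rcases u with _ | _ | _ | _ <;> rcases v with _ | _ | _ | _ <;> simp only [layer] <;> try omega
  all_goals simp only [vertexCenter] at hdist
  · exact absurd hdist one_lt_dist_sC_qC.not_ge
  · exact absurd hdist one_lt_dist_sC_tC.not_ge
  · exact absurd hdist one_lt_dist_pC_tC.not_ge

lemma edist_le_one_of_layer_eq (hla : ∀ a, |la a| ≤ 1 / 2) (hlb : ∀ b, |lb b| ≤ 1 / 2)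
    (hlc : ∀ c, |lc c| ≤ 1 / 2) ⦃u v : A ⊕ ({e // e ∈ EAB} ⊕ ({e // e ∈ EBC} ⊕ C))⦄
    (h : layer u = layer v) : (K EAB EBC la lb lc).edist u v ≤ 1 := by
  suffices dist (vertexCenter EAB EBC la lb lc u) (vertexCenter EAB EBC la lb lc v) ≤ 1 by
    rw [SimpleGraph.edist_le_one_iff_adj_or_eq, adj_iff]
    tauto
  have hab := fun a a' => abs_sub_le_one_of_abs_le_half (hla a) (hla a')
  have hbb := fun b b' => abs_sub_le_one_of_abs_le_half (hlb b) (hlb b')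
  have hcc := fun c c' => abs_sub_le_one_of_abs_le_half (hlc c) (hlc c')
  rcases u with _ | _ | _ | _ <;> rcases v with _ | _ | _ | _ <;> simp only [layer] at h <;>
    try omega
  all_goals simp only [vertexCenter, dist_sC_sC_le_one_iff, dist_pC_pC_le_one_iff,
    dist_qC_qC_le_one_iff, dist_tC_tC_le_one_iff, hab, hbb, hcc, and_self]

lemma fst_eq_of_adj (hia : Function.Injective la) {a : A} {e : {e // e ∈ EAB}}
    (h : (K EAB EBC la lb lc).Adj (.inl a) (.inr (.inl e))) : e.1.1 = a :=
  hia (dist_sC_pC_le_one_iff.1 (adj_iff.1 h).2).1.symm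

lemma adj_fst (hlb : ∀ b, |lb b| ≤ 1 / 2) (e : {e // e ∈ EAB}) :
    (K EAB EBC la lb lc).Adj (.inl e.1.1) (.inr (.inl e)) :=
  adj_iff.2 ⟨Sum.inl_ne_inr, dist_sC_pC_le_one_iff.2 ⟨rfl, hlb _⟩⟩

lemma snd_eq_fst_of_adj (hib : Function.Injective lb) {e : {e // e ∈ EAB}}
    {f : {e // e ∈ EBC}} (h : (K EAB EBC la lb lc).Adj (.inr (.inl e)) (.inr (.inr (.inl f)))) :
    e.1.2 = f.1.1 :=
  hib (dist_pC_qC_le_one_iff.1 (adj_iff.1 h).2).1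

lemma adj_of_snd_eq_fst (hla : ∀ a, |la a| ≤ 1 / 2) (hlc : ∀ c, |lc c| ≤ 1 / 2)
    {e : {e // e ∈ EAB}} {f : {e // e ∈ EBC}} (h : e.1.2 = f.1.1) :
    (K EAB EBC la lb lc).Adj (.inr (.inl e)) (.inr (.inr (.inl f))) :=
  adj_iff.2 ⟨by simp, dist_pC_qC_le_one_iff.2
    ⟨congrArg lb h, abs_sub_le_one_of_abs_le_half (hla _) (hlc _)⟩⟩

lemma snd_eq_of_adj (hic : Function.Injective lc) {f : {e // e ∈ EBC}} {c : C}
    (h : (K EAB EBC la lb lc).Adj (.inr (.inr (.inl f))) (.inr (.inr (.inr c)))) : f.1.2 = c :=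
  hic (dist_qC_tC_le_one_iff.1 (adj_iff.1 h).2).1

lemma adj_snd (hlb : ∀ b, |lb b| ≤ 1 / 2) (f : {e // e ∈ EBC}) :
    (K EAB EBC la lb lc).Adj (.inr (.inr (.inl f))) (.inr (.inr (.inr f.1.2))) :=
  adj_iff.2 ⟨by simp, dist_qC_tC_le_one_iff.2 ⟨rfl, hlb _⟩⟩

theorem exists_of_edist_le_three (hia : Function.Injective la) (hib : Function.Injective lb)
    (hic : Function.Injective lc) {a : A} {c : C}
    (h : (K EAB EBC la lb lc).edist (.inl a) (.inr (.inr (.inr c))) ≤ 3) :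
    ∃ b, (a, b) ∈ EAB ∧ (b, c) ∈ EBC := by
  obtain ⟨w, hw⟩ := SimpleGraph.exists_walk_of_edist_ne_top (h.trans_lt (by decide)).ne
  have hlen : w.length = 3 := by
    refine le_antisymm (by exact_mod_cast hw ▸ h) ?_
    simpa [layer] using w.apply_le_apply_add_length fun _ _ => layer_le_succ_of_adj
  have h₁ := w.adj_getVert_succ (i := 0) (by omega)
  have h₂ := w.adj_getVert_succ (i := 1) (by omega)
  have h₃ := w.adj_getVert_succ (i := 2) (by omega)
  rw [SimpleGraph.Walk.getVert_zero] at h₁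
  rw [show 2 + 1 = w.length by omega, SimpleGraph.Walk.getVert_length] at h₃
  have hl₁ := layer_le_succ_of_adj h₁
  have hl₂ := layer_le_succ_of_adj h₂
  have hl₃ := layer_le_succ_of_adj h₃
  generalize w.getVert (0 + 1) = v₁ at h₁ h₂ hl₁ hl₂
  generalize w.getVert (1 + 1) = v₂ at h₂ h₃ hl₂ hl₃
  rcases v₁ with _ | ⟨⟨a', b⟩, hab⟩ | _ | _ <;> rcases v₂ with _ | _ | ⟨⟨b', c'⟩, hbc⟩ | _ <;>
    simp only [layer] at hl₁ hl₂ hl₃ <;> try omega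
  obtain rfl : a' = a := fst_eq_of_adj hia h₁
  obtain rfl : b = b' := snd_eq_fst_of_adj hib h₂
  obtain rfl : c' = c := snd_eq_of_adj hic h₃
  exact ⟨b, hab, hbc⟩

lemma exists_anchor (hla : ∀ a, |la a| ≤ 1 / 2) (hlb : ∀ b, |lb b| ≤ 1 / 2)
    (hlc : ∀ c, |lc c| ≤ 1 / 2) (u : A ⊕ ({e // e ∈ EAB} ⊕ ({e // e ∈ EBC} ⊕ C))) :
    (∃ a, (K EAB EBC la lb lc).edist u (.inl a) ≤ 1 ∧
        ∀ e : {e // e ∈ EAB}, e.1.1 = a → (K EAB EBC la lb lc).edist u (.inr (.inl e)) ≤ 1) ∨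
      (∃ c, (K EAB EBC la lb lc).edist u (.inr (.inr (.inr c))) ≤ 1 ∧
        ∀ f : {e // e ∈ EBC}, f.1.2 = c →
          (K EAB EBC la lb lc).edist u (.inr (.inr (.inl f))) ≤ 1) := by
  have hsame := edist_le_one_of_layer_eq (EAB := EAB) (EBC := EBC) hla hlb hlc
  rcases u with a | e | f | c
  · exact .inl ⟨a, hsame rfl, by rintro e rfl; exact (adj_fst hlb e).edist_le_one⟩
  · exact .inl ⟨e.1.1, (adj_fst hlb e).symm.edist_le_one, fun _ _ => hsame rfl⟩
  · exact .inr ⟨f.1.2, (adj_snd hlb f).edist_le_one, fun _ _ => hsame rfl⟩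
  · exact .inr ⟨c, hsame rfl, by rintro f rfl; exact (adj_snd hlb f).symm.edist_le_one⟩

theorem edist_le_three_of_forall_exists (hla : ∀ a, |la a| ≤ 1 / 2)
    (hlb : ∀ b, |lb b| ≤ 1 / 2) (hlc : ∀ c, |lc c| ≤ 1 / 2)
    (H : ∀ a c, ∃ b, (a, b) ∈ EAB ∧ (b, c) ∈ EBC)
    (u v : A ⊕ ({e // e ∈ EAB} ⊕ ({e // e ∈ EBC} ⊕ C))) :
    (K EAB EBC la lb lc).edist u v ≤ 3 := by
  have hsame := edist_le_one_of_layer_eq (EAB := EAB) (EBC := EBC) hla hlb hlc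
  have hcross : ∀ {a c u v},
      (∀ e : {e // e ∈ EAB}, e.1.1 = a → (K EAB EBC la lb lc).edist u (.inr (.inl e)) ≤ 1) →
      (∀ f : {e // e ∈ EBC}, f.1.2 = c →
        (K EAB EBC la lb lc).edist v (.inr (.inr (.inl f))) ≤ 1) →
      (K EAB EBC la lb lc).edist u v ≤ 3 := by
    intro a c u v hu hv
    obtain ⟨b, hab, hbc⟩ := H a c
    exact SimpleGraph.edist_le_three_of_le_one (hu ⟨_, hab⟩ rfl)
      (adj_of_snd_eq_fst hla hlc (f := ⟨_, hbc⟩) rfl).edist_le_one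
      (SimpleGraph.edist_comm.trans_le (hv ⟨_, hbc⟩ rfl))
  rcases exists_anchor hla hlb hlc u with ⟨a, hua, huP⟩ | ⟨c, huc, huQ⟩ <;>
    rcases exists_anchor hla hlb hlc v with ⟨a', hva, hvP⟩ | ⟨c', hvc, hvQ⟩
  · exact SimpleGraph.edist_le_three_of_le_one hua (hsame (u := .inl a) (v := .inl a') rfl)
      (SimpleGraph.edist_comm.trans_le hva)
  · exact hcross huP hvQ
  · exact SimpleGraph.edist_comm.trans_le (hcross hvP huQ)
  · exact SimpleGraph.edist_le_three_of_le_one huc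
      (hsame (u := .inr (.inr (.inr c))) (v := .inr (.inr (.inr c'))) rfl)
      (SimpleGraph.edist_comm.trans_le hvc)

end K

theorem stmt5_general
    (EAB : Set (A × B)) (EBC : Set (B × C))
    (la : A → ℝ) (lb : B → ℝ) (lc : C → ℝ)
    (hinj : Function.Injective (Sum.elim la (Sum.elim lb lc)))
    (hrange : ∀ x : A ⊕ (B ⊕ C), Sum.elim la (Sum.elim lb lc) x ∈ Set.Ioc (0 : ℝ) 0.1) :
    (∀ u v, (K EAB EBC la lb lc).edist u v ≤ 3) ↔
      ∀ a : A, ∀ c : C, ∃ b : B, (a, b) ∈ EAB ∧ (b, c) ∈ EBC := by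
  have hl : ∀ x, |Sum.elim la (Sum.elim lb lc) x| ≤ 1 / 2 := fun x =>
    abs_le.2 ⟨by linarith [(hrange x).1], by linarith [(hrange x).2]⟩
  constructor
  · exact fun h a c => K.exists_of_edist_le_three (fun _ _ h => Sum.inl_injective (hinj h))
      (fun _ _ h => Sum.inl_injective (Sum.inr_injective (hinj h)))
      (fun _ _ h => Sum.inr_injective (Sum.inr_injective (hinj h))) (h _ _)
  · exact K.edist_le_three_of_forall_exists (fun a => hl (.inl a)) (fun b => hl (.inr (.inl b)))
      (fun c => hl (.inr (.inr c)))

theorem stmt5 [Fintype A] [Fintype B] [Fintype C]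
    (EAB : Set (A × B)) (EBC : Set (B × C))
    (la : A → ℝ) (lb : B → ℝ) (lc : C → ℝ)
    (hinj : Function.Injective (Sum.elim la (Sum.elim lb lc)))
    (hrange : ∀ x : A ⊕ (B ⊕ C), Sum.elim la (Sum.elim lb lc) x ∈ Set.Ioc (0 : ℝ) 0.1) :
    (∀ u v, (K EAB EBC la lb lc).edist u v ≤ 3) ↔
      ∀ a : A, ∀ c : C, ∃ b : B, (a, b) ∈ EAB ∧ (b, c) ∈ EBC :=
  stmt5_general EAB EBC la lb lc hinj hrange
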